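/- Let T(a) ∈ R^{W×W} be the matrix whose first W−1 rows satisfy T_{l,j} = t_{j−l} − t_{j−l−1} for some real sequence (t_m) with t_{−m} = −t_{m+1} shift structure making cen(T_{\W\∅}) = −T_{\W\∅} (where T_{\W\∅} is T with its last row deleted), and whose last row is all ones. If T(a) is nonsingular and a* = T(a*)^{-1} b with b = (0,…,0,1)ᵀ, then the entries of a* satisfy a*_j = a*_{W−j+1} for all 1 ≤ j ≤ W. -/
import Mathlib


theorem stmt11 {n : ℕ} (T : Matrix (Fin (n + 1)) (Fin (n + 1)) ℝ)
    (hskew : ∀ (l : Fin n) (j : Fin (n + 1)),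
      T l.castSucc j = -T l.rev.castSucc j.rev)
    (hlast : ∀ j, T (Fin.last n) j = 1)
    (hdet : IsUnit T.det)
    (a : Fin (n + 1) → ℝ)
    (ha : a = T⁻¹.mulVec (Pi.single (Fin.last n) 1)) :
    ∀ j : Fin (n + 1), a j = a j.rev := by
  have hTa : T.mulVec a = Pi.single (Fin.last n) 1 := by
    rw [ha, Matrix.mulVec_mulVec, Matrix.mul_nonsing_inv T hdet, Matrix.one_mulVec]
  set a' : Fin (n + 1) → ℝ := fun j => a j.rev with ha'
  have hTa' : T.mulVec a' = Pi.single (Fin.last n) 1 := by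
    funext l
    induction l using Fin.lastCases with
    | last =>
      have h1 : (T.mulVec a) (Fin.last n) = 1 := by simp [hTa]
      simp only [Matrix.mulVec, dotProduct, hlast, one_mul] at h1 ⊢
      rw [Pi.single_eq_same]
      rw [← h1]
      exact Fintype.sum_equiv (Fin.revPerm) _ _ (fun j => rfl)
    | cast l' =>
      have h0 : (T.mulVec a) (l'.rev.castSucc) = 0 := by
        rw [hTa]
        exact Pi.single_eq_of_ne (by simp [Fin.ext_iff, Fin.castSucc_lt_last l'.rev |>.ne]) _
      simp only [Matrix.mulVec, dotProduct] at h0 ⊢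
      rw [Pi.single_eq_of_ne (by exact (Fin.castSucc_lt_last l').ne)]
      rw [show (∑ j, T l'.castSucc j * a' j) = ∑ j, T l'.castSucc j.rev * a j from
        Fintype.sum_equiv (Fin.revPerm) _ _ (fun j => by simp [ha'])]
      have : ∀ j : Fin (n + 1), T l'.castSucc j.rev = -T l'.rev.castSucc j := by
        intro j
        rw [hskew l' j.rev, Fin.rev_rev]
      simp only [this, neg_mul]
      rw [Finset.sum_neg_distrib, h0, neg_zero]
  have : a' = a := by
    have h := congrArg (T⁻¹.mulVec) (hTa'.trans hTa.symm)
    simpa [Matrix.mulVec_mulVec, Matrix.nonsing_inv_mul T hdet, Matrix.one_mulVec] using h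
  intro j
  exact (congrFun this j).symm
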